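/- arXiv:1611.09317 — 2 statements merged into one kernel-verified Lean document; each statement's English description precedes it below -/
import Mathlib

section
/- Let z ∈ ℝ^d and X = Σ_i z_i ε_i where ε_i are i.i.d. Rademacher (±1 with probability 1/2 each). Then E[|X|] ≥ ‖z‖₂ / √2. -/
open MeasureTheory ProbabilityTheory Finset

/-!
Identify the Rademacher vector with a uniform point `x` of the cube `{±1}^d` and put
`f x = |∑ zᵢ xᵢ|`. Flipping the coordinate `i` moves `f` by at most `2|zᵢ|`, and the Walsh–Fourier
identity `4 ∑_A |A| f̂(A)² = ∑ᵢ 𝔼 (f - f ∘ flipᵢ)²` turns this into `∑_A |A| f̂(A)² ≤ ‖z‖²`.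
As `f` is even, `f̂(A) = 0` whenever `|A|` is odd, so every `A ≠ ∅` that contributes has `|A| ≥ 2`.
Together with Parseval, `∑_A f̂(A)² = 𝔼 f² = ‖z‖²`, this gives `2 (‖z‖² - (𝔼 f)²) ≤ ‖z‖²`,
i.e. `𝔼 f ≥ ‖z‖ / √2`.
-/

def Bool.toSign (b : Bool) : ℝ := if b then 1 else -1

@[simp] lemma Bool.toSign_true : true.toSign = 1 := rfl

@[simp] lemma Bool.toSign_false : false.toSign = -1 := rfl

@[simp] lemma Bool.toSign_not (b : Bool) : (!b).toSign = -b.toSign := by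
  cases b <;> simp

@[simp] lemma Bool.toSign_mul_self (b : Bool) : b.toSign * b.toSign = 1 := by
  cases b <;> simp

namespace BooleanCube

variable {ι : Type*}

def walsh (A : Finset ι) (x : ι → Bool) : ℝ := ∏ i ∈ A, (x i).toSign

section Flip

variable [DecidableEq ι]

def flipOn (S : Finset ι) (x : ι → Bool) : ι → Bool := fun j => if j ∈ S then !x j else x j

lemma flipOn_involutive (S : Finset ι) : Function.Involutive (flipOn S) := by
  intro x
  funext j
  by_cases hj : j ∈ S <;> simp [flipOn, hj]

lemma toSign_flipOn (S : Finset ι) (x : ι → Bool) (j : ι) :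
    (flipOn S x j).toSign = (if j ∈ S then -1 else 1) * (x j).toSign := by
  by_cases hj : j ∈ S <;> simp [flipOn, hj]

lemma walsh_flipOn (A S : Finset ι) (x : ι → Bool) :
    walsh A (flipOn S x) = (-1) ^ #(A ∩ S) * walsh A x := by
  simp_rw [walsh, toSign_flipOn, prod_mul_distrib, prod_ite_mem, prod_const]

end Flip

variable [Fintype ι] [DecidableEq ι]

/-- Unnormalised: `2 ^ card ι` times the usual coefficient `𝔼ₓ [g x * walsh A x]`. -/
def walshCoeff (g : (ι → Bool) → ℝ) (A : Finset ι) : ℝ := ∑ x, g x * walsh A x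

lemma walshCoeff_empty (g : (ι → Bool) → ℝ) : walshCoeff g ∅ = ∑ x, g x := by
  simp [walshCoeff, walsh]

lemma walshCoeff_sub (g h : (ι → Bool) → ℝ) (A : Finset ι) :
    walshCoeff (fun x => g x - h x) A = walshCoeff g A - walshCoeff h A := by
  simp only [walshCoeff, sub_mul, sum_sub_distrib]

lemma sum_walsh_mul_walsh (A B : Finset ι) :
    ∑ x, walsh A x * walsh B x = if A = B then 2 ^ Fintype.card ι else 0 := by
  have hwalsh (C : Finset ι) (x : ι → Bool) :
      walsh C x = ∏ i, if i ∈ C then (x i).toSign else 1 := by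
    rw [prod_ite_mem, univ_inter, walsh]
  have hfactor (i : ι) :
      ∑ b : Bool, (if i ∈ A then b.toSign else 1) * (if i ∈ B then b.toSign else 1)
        = if (i ∈ A ↔ i ∈ B) then 2 else 0 := by
    by_cases hA : i ∈ A <;> by_cases hB : i ∈ B <;> simp [hA, hB]
  simp_rw [hwalsh, ← prod_mul_distrib]
  rw [← Fintype.prod_sum fun i (b : Bool) =>
    (if i ∈ A then b.toSign else 1) * (if i ∈ B then b.toSign else 1)]
  simp_rw [hfactor]
  rw [prod_ite_zero]
  simp [Finset.ext_iff]

lemma sum_walsh_mul_walsh_apply (x y : ι → Bool) :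
    ∑ A, walsh A x * walsh A y = if x = y then 2 ^ Fintype.card ι else 0 := by
  have hfactor (i : ι) : (x i).toSign * (y i).toSign + 1 = if x i = y i then 2 else 0 := by
    cases x i <;> cases y i <;> norm_num
  simp_rw [walsh, ← prod_mul_distrib]
  simpa [hfactor, prod_ite_zero, funext_iff] using
    (Fintype.prod_add (fun i => (x i).toSign * (y i).toSign) 1).symm

theorem sum_walshCoeff_sq (g : (ι → Bool) → ℝ) :
    ∑ A, walshCoeff g A ^ 2 = 2 ^ Fintype.card ι * ∑ x, g x ^ 2 := by
  calc ∑ A, walshCoeff g A ^ 2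
      = ∑ x, ∑ y, g x * g y * ∑ A, walsh A x * walsh A y := by
        simp_rw [walshCoeff, sq, sum_mul_sum, mul_sum]
        rw [sum_comm]
        refine sum_congr rfl fun x _ => ?_
        rw [sum_comm]
        exact sum_congr rfl fun y _ => sum_congr rfl fun A _ => by ring
    _ = 2 ^ Fintype.card ι * ∑ x, g x ^ 2 := by
        simp [sum_walsh_mul_walsh_apply, mul_sum, sq, mul_comm]

lemma walshCoeff_comp_flipOn (g : (ι → Bool) → ℝ) (A S : Finset ι) :
    walshCoeff (fun x => g (flipOn S x)) A = (-1) ^ #(A ∩ S) * walshCoeff g A := by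
  have hinv := flipOn_involutive S
  calc walshCoeff (fun x => g (flipOn S x)) A
      = ∑ x, g (flipOn S x) * walsh A (flipOn S (flipOn S x)) := by
        simp only [walshCoeff, hinv _]
    _ = ∑ x, g x * walsh A (flipOn S x) :=
        hinv.bijective.sum_comp fun x => g x * walsh A (flipOn S x)
    _ = (-1) ^ #(A ∩ S) * walshCoeff g A := by
        simp only [walshCoeff, walsh_flipOn, mul_sum]
        exact sum_congr rfl fun x _ => by ring

lemma walshCoeff_eq_zero_of_odd {g : (ι → Bool) → ℝ} (hg : ∀ x, g (flipOn univ x) = g x)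
    {A : Finset ι} (hA : Odd #A) : walshCoeff g A = 0 := by
  have h := walshCoeff_comp_flipOn g A univ
  simp only [hg, inter_univ, hA.neg_one_pow] at h
  linarith

theorem four_mul_sum_card_mul_walshCoeff_sq (g : (ι → Bool) → ℝ) :
    4 * ∑ A, #A * walshCoeff g A ^ 2
      = 2 ^ Fintype.card ι * ∑ i, ∑ x, (g x - g (flipOn {i} x)) ^ 2 := by
  have hderiv (i : ι) (A : Finset ι) : walshCoeff (fun x => g x - g (flipOn {i} x)) A
      = if i ∈ A then 2 * walshCoeff g A else 0 := by
    rw [walshCoeff_sub, walshCoeff_comp_flipOn]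
    by_cases hi : i ∈ A
    · simp [hi]
      ring
    · simp [hi]
  calc 4 * ∑ A, #A * walshCoeff g A ^ 2
      = ∑ A, ∑ i, (if i ∈ A then 2 * walshCoeff g A else 0) ^ 2 := by
        rw [mul_sum]
        refine sum_congr rfl fun A _ => ?_
        simp [ite_pow, sum_ite_mem]
        ring
    _ = 2 ^ Fintype.card ι * ∑ i, ∑ x, (g x - g (flipOn {i} x)) ^ 2 := by
        rw [sum_comm, mul_sum]
        simp_rw [← hderiv, sum_walshCoeff_sq]

lemma two_mul_walshCoeff_sq_le {g : (ι → Bool) → ℝ} (hg : ∀ x, g (flipOn univ x) = g x)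
    {A : Finset ι} (hA : A.Nonempty) : 2 * walshCoeff g A ^ 2 ≤ #A * walshCoeff g A ^ 2 := by
  rcases Nat.even_or_odd #A with heven | hodd
  · have hcard : 2 ≤ #A := by
      obtain ⟨k, hk⟩ := heven
      have := hA.card_pos
      omega
    gcongr
    exact_mod_cast hcard
  · simp [walshCoeff_eq_zero_of_odd hg hodd]

theorem poincare_of_flipOn_univ_invariant {g : (ι → Bool) → ℝ}
    (hg : ∀ x, g (flipOn univ x) = g x) :
    8 * (2 ^ Fintype.card ι * ∑ x, g x ^ 2 - (∑ x, g x) ^ 2)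
      ≤ 2 ^ Fintype.card ι * ∑ i, ∑ x, (g x - g (flipOn {i} x)) ^ 2 := by
  rw [← four_mul_sum_card_mul_walshCoeff_sq, ← sum_walshCoeff_sq, ← walshCoeff_empty]
  have hsplit (f : Finset ι → ℝ) : ∑ A, f A = f ∅ + ∑ A ∈ univ.erase ∅, f A :=
    (add_sum_erase _ _ (mem_univ _)).symm
  have hnonempty := sum_le_sum fun A (hA : A ∈ univ.erase ∅) =>
    two_mul_walshCoeff_sq_le hg (nonempty_iff_ne_empty.2 (ne_of_mem_erase hA))
  rw [← mul_sum] at hnonempty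
  rw [hsplit, hsplit fun A => #A * walshCoeff g A ^ 2]
  simp only [card_empty, Nat.cast_zero, zero_mul, zero_add]
  linarith

lemma sum_sq_sum_mul_toSign (z : ι → ℝ) :
    ∑ x : ι → Bool, (∑ i, z i * (x i).toSign) ^ 2 = 2 ^ Fintype.card ι * ∑ i, z i ^ 2 := by
  calc ∑ x : ι → Bool, (∑ i, z i * (x i).toSign) ^ 2
      = ∑ i, ∑ j, z i * z j * ∑ x, walsh {i} x * walsh {j} x := by
        simp_rw [walsh, prod_singleton, sq, sum_mul_sum, mul_sum]
        rw [sum_comm]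
        refine sum_congr rfl fun i _ => ?_
        rw [sum_comm]
        exact sum_congr rfl fun j _ => sum_congr rfl fun x _ => by ring
    _ = 2 ^ Fintype.card ι * ∑ i, z i ^ 2 := by
        simp [sum_walsh_mul_walsh, mul_sum, sq, mul_comm]

lemma sq_abs_sub_abs_flipOn_singleton_le (z : ι → ℝ) (i : ι) (x : ι → Bool) :
    (|∑ j, z j * (x j).toSign| - |∑ j, z j * (flipOn {i} x j).toSign|) ^ 2 ≤ 4 * z i ^ 2 := by
  have hdiff : ∑ j, z j * (x j).toSign - ∑ j, z j * (flipOn {i} x j).toSign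
      = 2 * z i * (x i).toSign := by
    rw [← sum_sub_distrib, sum_eq_single i (fun j _ hj => by simp [toSign_flipOn, hj]) (by simp)]
    simp [toSign_flipOn]
    ring
  calc (|∑ j, z j * (x j).toSign| - |∑ j, z j * (flipOn {i} x j).toSign|) ^ 2
      ≤ (∑ j, z j * (x j).toSign - ∑ j, z j * (flipOn {i} x j).toSign) ^ 2 :=
        sq_le_sq.2 (by simpa using abs_abs_sub_abs_le_abs_sub _ _)
    _ = 4 * z i ^ 2 := by
        rw [hdiff, mul_pow, sq (x i).toSign, Bool.toSign_mul_self]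
        ring

theorem mul_sqrt_div_sqrt_two_le_sum_abs (z : ι → ℝ) :
    2 ^ Fintype.card ι * (√(∑ i, z i ^ 2) / √2) ≤ ∑ x : ι → Bool, |∑ i, z i * (x i).toSign| := by
  set f : (ι → Bool) → ℝ := fun x => |∑ i, z i * (x i).toSign|
  have h_even (x : ι → Bool) : f (flipOn univ x) = f x := by
    simp [f, toSign_flipOn, sum_neg_distrib]
  have h_sq : ∑ x, f x ^ 2 = 2 ^ Fintype.card ι * ∑ i, z i ^ 2 := by
    simp [f, sq_abs, sum_sq_sum_mul_toSign]
  have h_grad : ∑ i, ∑ x, (f x - f (flipOn {i} x)) ^ 2 ≤ 2 ^ Fintype.card ι * (4 * ∑ i, z i ^ 2) :=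
    calc ∑ i, ∑ x, (f x - f (flipOn {i} x)) ^ 2
        ≤ ∑ i, ∑ _x : ι → Bool, 4 * z i ^ 2 :=
          sum_le_sum fun i _ => sum_le_sum fun x _ => sq_abs_sub_abs_flipOn_singleton_le z i x
      _ = 2 ^ Fintype.card ι * (4 * ∑ i, z i ^ 2) := by
          simp [mul_sum]
  have h_poincare := poincare_of_flipOn_univ_invariant h_even
  rw [h_sq] at h_poincare
  have hN : (0 : ℝ) ≤ 2 ^ Fintype.card ι := by positivity
  have hS : (2 ^ Fintype.card ι) ^ 2 * ∑ i, z i ^ 2 ≤ 2 * (∑ x, f x) ^ 2 := by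
    nlinarith [mul_le_mul_of_nonneg_left h_grad hN]
  have hS0 : 0 ≤ ∑ x, f x := sum_nonneg fun x _ => abs_nonneg _
  rw [← pow_le_pow_iff_left₀ (by positivity) hS0 two_ne_zero, mul_pow, div_pow,
    Real.sq_sqrt (sum_nonneg fun i _ => sq_nonneg _), Real.sq_sqrt zero_le_two]
  linarith

end BooleanCube

noncomputable def rademacher : Measure ℝ :=
  (1/2 : ENNReal) • Measure.dirac (1 : ℝ) + (1/2 : ENNReal) • Measure.dirac (-1 : ℝ)

noncomputable def uniformBool : Measure Bool :=
  (1/2 : ENNReal) • Measure.dirac true + (1/2 : ENNReal) • Measure.dirac false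

instance : IsProbabilityMeasure uniformBool :=
  ⟨by simp [uniformBool, ENNReal.inv_two_add_inv_two]⟩

instance : IsProbabilityMeasure rademacher :=
  ⟨by simp [rademacher, ENNReal.inv_two_add_inv_two]⟩

lemma map_toSign_uniformBool : uniformBool.map Bool.toSign = rademacher := by
  simp [uniformBool, rademacher, Measure.map_add _ _ .of_discrete, Measure.map_smul,
    Measure.map_dirac' .of_discrete]

lemma integral_pi_uniformBool {ι : Type*} [Fintype ι] [DecidableEq ι] (F : (ι → Bool) → ℝ) :
    ∫ x, F x ∂Measure.pi (fun _ : ι => uniformBool) = (2 ^ Fintype.card ι)⁻¹ * ∑ x, F x := by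
  have hsingleton (x : ι → Bool) :
      Measure.pi (fun _ : ι => uniformBool) {x} = 2⁻¹ ^ Fintype.card ι := by
    rw [← Set.univ_pi_singleton, Measure.pi_pi]
    have hb (b : Bool) : uniformBool {b} = 2⁻¹ := by cases b <;> simp [uniformBool]
    simp [hb]
  simp [integral_fintype .of_finite, Measure.real, hsingleton, mul_sum]

theorem integral_comp_eq_average_of_rademacher {Ω : Type*} [MeasurableSpace Ω] {μ : Measure Ω}
    [IsProbabilityMeasure μ] {ι : Type*} [Fintype ι] [DecidableEq ι] {ε : ι → Ω → ℝ}
    (hindep : iIndepFun ε μ) (hrad : ∀ i, μ.map (ε i) = rademacher) {F : (ι → ℝ) → ℝ}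
    (hF : Measurable F) :
    ∫ ω, F (fun i => ε i ω) ∂μ
      = (2 ^ Fintype.card ι)⁻¹ * ∑ x : ι → Bool, F (fun i => (x i).toSign) := by
  have hε (i : ι) : AEMeasurable (ε i) μ :=
    .of_map_ne_zero (by rw [hrad]; exact IsProbabilityMeasure.ne_zero _)
  have hlaw : μ.map (fun ω i => ε i ω)
      = (Measure.pi fun _ : ι => uniformBool).map (fun x i => (x i).toSign) := by
    rw [(iIndepFun_iff_map_fun_eq_pi_map hε).1 hindep,
      Measure.pi_map_pi fun _ => Measurable.of_discrete.aemeasurable]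
    simp [hrad, map_toSign_uniformBool]
  rw [← integral_map (aemeasurable_pi_lambda _ hε) hF.aestronglyMeasurable, hlaw,
    integral_map Measurable.of_discrete.aemeasurable hF.aestronglyMeasurable,
    integral_pi_uniformBool]

theorem khintchine_lower_general {Ω : Type*} [MeasurableSpace Ω] (μ : Measure Ω)
    [IsProbabilityMeasure μ] (d : ℕ) (ε : Fin d → Ω → ℝ)
    (hindep : iIndepFun ε μ)
    (hrad : ∀ i, Measure.map (ε i) μ =
      (1/2 : ENNReal) • Measure.dirac (1 : ℝ) + (1/2 : ENNReal) • Measure.dirac (-1 : ℝ))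
    (z : Fin d → ℝ) :
    (∫ ω, |∑ i, z i * ε i ω| ∂μ) ≥ Real.sqrt (∑ i, (z i) ^ 2) / Real.sqrt 2 := by
  have hF : Measurable fun y : Fin d → ℝ => |∑ i, z i * y i| := by fun_prop
  rw [integral_comp_eq_average_of_rademacher hindep hrad hF, ge_iff_le,
    le_inv_mul_iff₀ (by positivity)]
  simpa using BooleanCube.mul_sqrt_div_sqrt_two_le_sum_abs z

/-- Khintchine lower bound: for i.i.d. Rademacher `ε i` and `z ∈ ℝ^d`,
`E[|Σ z_i ε_i|] ≥ ‖z‖₂ / √2`. -/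
theorem khintchine_lower {Ω : Type*} [MeasurableSpace Ω] (μ : Measure Ω)
    [IsProbabilityMeasure μ] (d : ℕ) (ε : Fin d → Ω → ℝ)
    (hmeas : ∀ i, Measurable (ε i))
    (hindep : iIndepFun ε μ)
    (hrad : ∀ i, Measure.map (ε i) μ =
      (1/2 : ENNReal) • Measure.dirac (1 : ℝ) + (1/2 : ENNReal) • Measure.dirac (-1 : ℝ))
    (z : Fin d → ℝ) :
    (∫ ω, |∑ i, z i * ε i ω| ∂μ) ≥ Real.sqrt (∑ i, (z i) ^ 2) / Real.sqrt 2 :=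
  khintchine_lower_general μ d ε hindep hrad z
end

section
/- Let p ∈ [1,2), r > 0, ε > 0, ρ_p = d^(1-1/p), x₁ = r·d^(−1/p + 1/2 − ε)·(1,…,1) ∈ ℝ^d, and let v have independent coordinates with E[v_i]=0, |v_i| ≤ 1; set h(x) = ⌊⟨x,v⟩/(rρ_p)⌋. Then ‖x₁‖_p = r·d^(1/2 − ε) and P(|h(x₁) − h(0)| > 1) ≤ 2·exp(−d^(2ε)/2). -/
/-!
The hash values `⌊y⌋` of `x₁` and of `0` differ by more than one only if `|y| > 1`, where
`y = ⟨x₁, v⟩ / (r ρ_p) = (∑ i, v i) / d^(1/2+ε)`; so the event forces `|∑ i, v i| ≥ d^(1/2+ε)`.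
By Hoeffding's lemma each `v i` is sub-Gaussian with parameter `1`, hence by independence `∑ i, v i`
is sub-Gaussian with parameter `d`, and each tail has probability at most
`exp(-d^(1+2ε) / (2d)) = exp(-d^(2ε) / 2)`.
-/

open MeasureTheory ProbabilityTheory Finset

noncomputable def lpnorm (p : ENNReal) {d : ℕ} (z : Fin d → ℝ) : ℝ :=
  ‖(WithLp.equiv p (Fin d → ℝ)).symm z‖

lemma lpnorm_const (p : ENNReal) [Fact (1 ≤ p)] {d : ℕ} (hd : 0 < d) (c : ℝ) :
    lpnorm p (fun _ : Fin d => c) = (d : ℝ) ^ (1 / p).toReal * |c| := by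
  have : Nonempty (Fin d) := ⟨⟨0, hd⟩⟩
  exact (PiLp.norm_toLp_const' (p := p) (ι := Fin d) c).trans (by simp)

lemma one_lt_abs_of_one_lt_abs_floor {α : Type*} [Field α] [LinearOrder α] [IsStrictOrderedRing α]
    [FloorRing α] {y : α} (h : 1 < |⌊y⌋|) : 1 < |y| := by
  rcases lt_abs.mp h with h | h
  · have : ((2 : ℤ) : α) ≤ y := Int.le_floor.mp (by omega)
    exact lt_abs.mpr (Or.inl (by push_cast at this; linarith))
  · have hfl : (⌊y⌋ : α) ≤ -2 := by exact_mod_cast (show ⌊y⌋ ≤ -2 by omega)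
    exact lt_abs.mpr (Or.inr (by linarith [Int.lt_floor_add_one y]))

lemma le_abs_of_one_lt_abs_floor_div {α : Type*} [Field α] [LinearOrder α]
    [IsStrictOrderedRing α] [FloorRing α] {a y : α} (ha : 0 < a) (h : 1 < |⌊y / a⌋|) :
    a ≤ |y| := by
  have := one_lt_abs_of_one_lt_abs_floor h
  rw [abs_div, abs_of_pos ha, one_lt_div ha] at this
  exact this.le

lemma ENNReal.toReal_one_sub_one_div {p : ENNReal} (hp : 1 ≤ p) :
    (1 - 1 / p).toReal = 1 - (1 / p).toReal := by
  rw [ENNReal.toReal_sub_of_le (by simpa using ENNReal.inv_le_one.2 hp) ENNReal.one_ne_top,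
    ENNReal.toReal_one]

namespace ProbabilityTheory

variable {Ω : Type*} [MeasurableSpace Ω] {μ : Measure Ω}

lemma HasSubgaussianMGF.measureReal_abs_ge_le {X : Ω → ℝ} {c : NNReal}
    (h : HasSubgaussianMGF X c μ) {ε : ℝ} (hε : 0 ≤ ε) :
    μ.real {ω | ε ≤ |X ω|} ≤ 2 * Real.exp (-ε ^ 2 / (2 * c)) := by
  have hsplit : {ω | ε ≤ |X ω|} = {ω | ε ≤ X ω} ∪ {ω | ε ≤ (-X) ω} := by
    ext ω; simp [le_abs, le_neg]
  calc μ.real {ω | ε ≤ |X ω|}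
      ≤ μ.real {ω | ε ≤ X ω} + μ.real {ω | ε ≤ (-X) ω} := hsplit ▸ measureReal_union_le _ _
    _ ≤ Real.exp (-ε ^ 2 / (2 * c)) + Real.exp (-ε ^ 2 / (2 * c)) :=
        add_le_add (h.measure_ge_le hε) (h.neg.measure_ge_le hε)
    _ = 2 * Real.exp (-ε ^ 2 / (2 * c)) := (two_mul _).symm

lemma measureReal_abs_sum_ge_le [IsProbabilityMeasure μ] {ι : Type*} {X : ι → Ω → ℝ}
    (hmeas : ∀ i, AEMeasurable (X i) μ) (hindep : iIndepFun X μ) (hmean : ∀ i, μ[X i] = 0)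
    (hbdd : ∀ i, ∀ᵐ ω ∂μ, |X i ω| ≤ 1) (s : Finset ι) {a : ℝ} (ha : 0 ≤ a) :
    μ.real {ω | a ≤ |∑ i ∈ s, X i ω|} ≤ 2 * Real.exp (-a ^ 2 / (2 * #s)) := by
  have hsubG : ∀ i ∈ s, HasSubgaussianMGF (X i) 1 μ := fun i _ => by
    simpa [one_add_one_eq_two] using
      hasSubgaussianMGF_of_mem_Icc_of_integral_eq_zero (a := -1) (b := 1) (hmeas i)
        (by filter_upwards [hbdd i] with ω hω using abs_le.mp hω) (hmean i)
  simpa using (HasSubgaussianMGF.sum_of_iIndepFun hindep hsubG).measureReal_abs_ge_le ha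

end ProbabilityTheory

theorem tightness_p_lt_two_general {Ω : Type*} [MeasurableSpace Ω] (μ : Measure Ω)
    [IsProbabilityMeasure μ] (d : ℕ) (hd : 0 < d) (v : Fin d → Ω → ℝ)
    (hmeas : ∀ i, Measurable (v i))
    (hindep : iIndepFun v μ)
    (hmean : ∀ i, ∫ ω, v i ω ∂μ = 0)
    (hbdd : ∀ i ω, |v i ω| ≤ 1)
    (p : ENNReal) (hp1 : 1 ≤ p)
    (r ε : ℝ) (hr : 0 < r) :
    lpnorm p (fun _ : Fin d => r * (d : ℝ) ^ (-(1/p).toReal + 1/2 - ε))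
        = r * (d : ℝ) ^ ((1:ℝ)/2 - ε) ∧
      (μ {ω | 1 < |⌊(∑ i, (r * (d : ℝ) ^ (-(1/p).toReal + 1/2 - ε)) * v i ω) /
            (r * (d : ℝ) ^ ((1 - 1/p).toReal))⌋ -
          ⌊(∑ i, (0 : ℝ) * v i ω) / (r * (d : ℝ) ^ ((1 - 1/p).toReal))⌋|}).toReal ≤
        2 * Real.exp (-((d : ℝ) ^ (2 * ε)) / 2) := by
  have : Fact (1 ≤ p) := ⟨hp1⟩
  have hd' : (0 : ℝ) < d := Nat.cast_pos.mpr hd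
  refine ⟨?_, ?_⟩
  · rw [lpnorm_const p hd, abs_of_pos (by positivity), mul_left_comm, ← Real.rpow_add hd']
    ring_nf
  set a : ℝ := (d : ℝ) ^ ((1 : ℝ) / 2 + ε)
  have ha : 0 < a := by positivity
  have hscale : r * (d : ℝ) ^ (-(1/p).toReal + 1/2 - ε) / (r * (d : ℝ) ^ (1 - 1/p).toReal) =
      a⁻¹ := by
    rw [ENNReal.toReal_one_sub_one_div hp1, mul_div_mul_left _ _ hr.ne', ← Real.rpow_sub hd',
      ← Real.rpow_neg hd'.le]
    ring_nf
  have hexponent : -a ^ 2 / (2 * d) = -((d : ℝ) ^ (2 * ε)) / 2 := by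
    rw [← Real.rpow_natCast a 2, ← Real.rpow_mul hd'.le,
      show ((1 : ℝ) / 2 + ε) * (2 : ℕ) = 1 + 2 * ε by push_cast; ring, Real.rpow_add hd',
      Real.rpow_one]
    field_simp
  calc _ ≤ μ.real {ω | a ≤ |∑ i, v i ω|} := measureReal_mono fun ω hω =>
        le_abs_of_one_lt_abs_floor_div ha (by
          simpa only [Set.mem_ofPred_eq, zero_mul, sum_const_zero, zero_div, Int.floor_zero,
            sub_zero, ← mul_sum, mul_div_right_comm, hscale, inv_mul_eq_div] using hω)
    _ ≤ 2 * Real.exp (-a ^ 2 / (2 * #(univ : Finset (Fin d)))) :=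
        measureReal_abs_sum_ge_le (fun i => (hmeas i).aemeasurable) hindep hmean
          (fun i => ae_of_all _ (hbdd i)) univ ha.le
    _ = 2 * Real.exp (-((d : ℝ) ^ (2 * ε)) / 2) := by
        rw [card_univ, Fintype.card_fin, hexponent]

/-- Tightness for `p ∈ [1,2)`: the point `x₁ = r·d^(-1/p+1/2-ε)·(1,…,1)` has
`‖x₁‖_p = r·d^(1/2-ε)` and collides with the origin except with probability
at most `2·exp(-d^(2ε)/2)`. -/
theorem tightness_p_lt_two {Ω : Type*} [MeasurableSpace Ω] (μ : Measure Ω)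
    [IsProbabilityMeasure μ] (d : ℕ) (hd : 0 < d) (v : Fin d → Ω → ℝ)
    (hmeas : ∀ i, Measurable (v i))
    (hindep : iIndepFun v μ)
    (hmean : ∀ i, ∫ ω, v i ω ∂μ = 0)
    (hbdd : ∀ i ω, |v i ω| ≤ 1)
    (p : ENNReal) (hp1 : 1 ≤ p) (hp2 : p < 2)
    (r ε : ℝ) (hr : 0 < r) (hε : 0 < ε) :
    lpnorm p (fun _ : Fin d => r * (d : ℝ) ^ (-(1/p).toReal + 1/2 - ε))
        = r * (d : ℝ) ^ ((1:ℝ)/2 - ε) ∧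
      (μ {ω | 1 < |⌊(∑ i, (r * (d : ℝ) ^ (-(1/p).toReal + 1/2 - ε)) * v i ω) /
            (r * (d : ℝ) ^ ((1 - 1/p).toReal))⌋ -
          ⌊(∑ i, (0 : ℝ) * v i ω) / (r * (d : ℝ) ^ ((1 - 1/p).toReal))⌋|}).toReal ≤
        2 * Real.exp (-((d : ℝ) ^ (2 * ε)) / 2) :=
  tightness_p_lt_two_general μ d hd v hmeas hindep hmean hbdd p hp1 r ε hr
end
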